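/- Let d be a positive divisor of n. Then Σ_{k | d} k·c(k) equals the cardinality of E(d,n), the set of R₂-classes inc(π) such that there exists k' ∈ ℤ/nℤ with π(i+d) = π(i) + k' for all i ∈ ℤ/nℤ; equivalently, d·c(d) = |E(d,n)| − Σ_{k | d, k ≠ d} k·c(k). -/

import Mathlib

open Equiv Filter Topology

/-- The cyclic permutation `σ : i ↦ i + 1` of `ZMod n`. -/
def cyc (n : ℕ) : Equiv.Perm (ZMod n) := Equiv.addRight (1 : ZMod n)

/-- The equivalence relation `R₂`: `π R₂ π'` iff `π' = σ^i ∘ π` for some integer `i`. -/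
def incSetoid (n : ℕ) : Setoid (Equiv.Perm (ZMod n)) where
  r π π' := ∃ i : ℤ, π' = cyc n ^ i * π
  iseqv := by
    constructor
    · exact fun π => ⟨0, by simp⟩
    · rintro π π' ⟨i, rfl⟩
      exact ⟨-i, by rw [← mul_assoc, ← zpow_add]; simp⟩
    · rintro a b c ⟨i, rfl⟩ ⟨j, rfl⟩
      exact ⟨j + i, by rw [← mul_assoc, ← zpow_add]⟩

/-- The set of `R₂`-equivalence classes. -/
def IncClasses (n : ℕ) := Quotient (incSetoid n)

/-- The well-defined map `inc(π) ↦ inc(π ∘ σ)` on `R₂`-classes. -/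
def incShift (n : ℕ) : IncClasses n → IncClasses n :=
  Quot.map (fun π => π * cyc n)
    (by rintro π π' ⟨i, rfl⟩; exact ⟨i, by simp only [mul_assoc]⟩)

/-- The 1-cycle (orbit under `inc(ρ) ↦ inc(ρ∘σ)`) of a class `q`. -/
def oneCycle (n : ℕ) (q : IncClasses n) : Set (IncClasses n) :=
  Set.range fun i : ℕ => (incShift n)^[i] q

/-- `c(d)`: the number of 1-cycles of cardinality `d`. -/
noncomputable def numCycles (n d : ℕ) : ℕ :=
  Set.ncard {S : Set (IncClasses n) | (∃ q, S = oneCycle n q) ∧ S.ncard = d}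

/-- `E(d,n)`: the set of `R₂`-classes `inc(π)` such that there exists `k' ∈ ℤ/nℤ` with
`π(i+d) = π(i) + k'` for all `i`. -/
def Eset (n d : ℕ) : Set (IncClasses n) :=
  {q | ∃ π : Equiv.Perm (ZMod n), Quotient.mk (incSetoid n) π = q ∧
    ∃ k' : ZMod n, ∀ i : ZMod n, π (i + (d : ZMod n)) = π i + k'}

lemma cyc_pow_apply {n : ℕ} (k : ℕ) (x : ZMod n) : (cyc n ^ k) x = x + (k : ZMod n) := by
  induction k generalizing x with
  | zero => simp
  | succ k ih =>
    rw [pow_succ, Equiv.Perm.mul_apply]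
    have h : (cyc n) x = x + 1 := rfl
    rw [h, ih]
    push_cast
    ring

lemma cyc_zpow_apply {n : ℕ} (i : ℤ) (x : ZMod n) : (cyc n ^ i) x = x + (i : ZMod n) := by
  induction i using Int.rec with
  | ofNat k =>
    have := cyc_pow_apply k x
    simpa [Int.ofNat_eq_coe, zpow_natCast] using this
  | negSucc k =>
    apply (cyc n ^ ((k+1 : ℕ) : ℤ)).injective
    rw [← Equiv.Perm.mul_apply, ← zpow_add]
    have h1 : ((k+1:ℕ):ℤ) + Int.negSucc k = 0 := by
      simp [Int.negSucc_eq]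
    rw [h1, zpow_zero, zpow_natCast, cyc_pow_apply]
    simp [Int.negSucc_eq]
    push_cast
    ring

lemma cyc_pow_n {n : ℕ} : cyc n ^ n = 1 := by
  ext x
  rw [cyc_pow_apply]
  simp

lemma mk_eq_mk_iff {n : ℕ} {π π' : Equiv.Perm (ZMod n)} :
    Quotient.mk (incSetoid n) π = Quotient.mk (incSetoid n) π' ↔
      ∃ i : ℤ, π' = cyc n ^ i * π := by
  rw [Quotient.eq]
  rfl

lemma incShift_mk {n : ℕ} (π : Equiv.Perm (ZMod n)) :
    incShift n (Quotient.mk (incSetoid n) π) = Quotient.mk (incSetoid n) (π * cyc n) := rfl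

lemma incShift_iterate {n : ℕ} (k : ℕ) (π : Equiv.Perm (ZMod n)) :
    (incShift n)^[k] (Quotient.mk (incSetoid n) π) =
      Quotient.mk (incSetoid n) (π * cyc n ^ k) := by
  induction k with
  | zero => rfl
  | succ k ih =>
    rw [pow_succ, ← mul_assoc, ← incShift_mk, ← ih]; exact Function.iterate_succ_apply' _ _ _

lemma incShift_iterate_n {n : ℕ} (q : IncClasses n) : (incShift n)^[n] q = q := by
  induction q using Quotient.ind with
  | _ π => rw [incShift_iterate, cyc_pow_n, mul_one]

lemma mem_periodicPts_incShift {n : ℕ} (hn : 1 ≤ n) (q : IncClasses n) :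
    q ∈ Function.periodicPts (incShift n) :=
  ⟨n, hn, incShift_iterate_n q⟩

lemma mem_Eset_iff {n d : ℕ} [NeZero n] (q : IncClasses n) :
    q ∈ Eset n d ↔ (incShift n)^[d] q = q := by
  constructor
  · rintro ⟨π, rfl, k', h⟩
    rw [incShift_iterate]
    apply mk_eq_mk_iff.mpr
    refine ⟨-(k'.val : ℤ), ?_⟩
    ext x
    rw [Equiv.Perm.mul_apply, cyc_zpow_apply, Equiv.Perm.mul_apply, cyc_pow_apply, h]
    push_cast
    rw [ZMod.natCast_val, ZMod.cast_id]
    ring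
  · intro h
    induction q using Quotient.ind with
    | _ π =>
      rw [incShift_iterate] at h; replace h := mk_eq_mk_iff.mp h
      obtain ⟨i, hi⟩ := h
      refine ⟨π, rfl, ((-i : ℤ) : ZMod n), fun x => ?_⟩
      have h1 : π (x + (d : ZMod n)) = (π * cyc n ^ d) x := by
        rw [Equiv.Perm.mul_apply, cyc_pow_apply]
      have h2 : π x = (π * cyc n ^ d) x + (i : ZMod n) := by
        conv_lhs => rw [hi]
        rw [Equiv.Perm.mul_apply, cyc_zpow_apply]
      rw [h1, h2]
      push_cast
      ring

lemma oneCycle_eq_coe {n : ℕ} [DecidableEq (IncClasses n)] (hn : 1 ≤ n) (q : IncClasses n) :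
    oneCycle n q = ↑((Finset.range (Function.minimalPeriod (incShift n) q)).image
      (fun i => (incShift n)^[i] q)) := by
  ext q'
  simp only [oneCycle, Set.mem_range, Finset.coe_image, Set.mem_image, Finset.mem_coe,
    Finset.mem_range]
  constructor
  · rintro ⟨i, rfl⟩
    have hpos := Function.minimalPeriod_pos_of_mem_periodicPts (mem_periodicPts_incShift hn q)
    exact ⟨i % Function.minimalPeriod (incShift n) q, Nat.mod_lt _ hpos,
      Function.iterate_mod_minimalPeriod_eq⟩
  · rintro ⟨i, -, rfl⟩
    exact ⟨i, rfl⟩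

lemma ncard_oneCycle {n : ℕ} (hn : 1 ≤ n) (q : IncClasses n) :
    (oneCycle n q).ncard = Function.minimalPeriod (incShift n) q := by
  classical
  rw [oneCycle_eq_coe hn, Set.ncard_coe_finset, Finset.card_image_of_injOn, Finset.card_range]
  intro a ha b hb hab
  exact Function.iterate_injOn_Iio_minimalPeriod (by simpa using ha) (by simpa using hb) hab

lemma mem_oneCycle_self {n : ℕ} (q : IncClasses n) : q ∈ oneCycle n q := ⟨0, rfl⟩

lemma oneCycle_eq_of_mem {n : ℕ} (hn : 1 ≤ n) {q q' : IncClasses n}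
    (h : q' ∈ oneCycle n q) : oneCycle n q' = oneCycle n q := by
  simp only [oneCycle, Set.mem_range] at h
  obtain ⟨i, rfl⟩ := h
  ext q''
  simp only [oneCycle, Set.mem_range]
  constructor
  · rintro ⟨j, rfl⟩
    exact ⟨j + i, by rw [Function.iterate_add_apply]⟩
  · rintro ⟨j, rfl⟩
    have hni : i ≤ n * i := Nat.le_mul_of_pos_left i hn
    have hfix : (incShift n)^[n * i] q = q := by
      rw [Function.iterate_mul]
      exact Function.iterate_fixed (incShift_iterate_n q) i
    refine ⟨j + n * i - i, ?_⟩
    rw [← Function.iterate_add_apply]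
    have he : j + n * i - i + i = j + n * i := by omega
    rw [he, Function.iterate_add_apply, hfix]

/-- For a positive divisor `d` of `n`: `Σ_{k ∣ d} k·c(k) = |E(d,n)|`, and equivalently
`d·c(d) = |E(d,n)| − Σ_{k ∣ d, k ≠ d} k·c(k)`. -/
theorem stmt10 (n d : ℕ) (hn : 1 ≤ n) (hd : 0 < d) (hdvd : d ∣ n) :
    (∑ k ∈ d.divisors, k * numCycles n k = (Eset n d).ncard) ∧
    (d * numCycles n d = (Eset n d).ncard - ∑ k ∈ d.divisors.erase d, k * numCycles n k) := by
  classical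
  haveI : NeZero n := ⟨by omega⟩
  haveI : Finite (IncClasses n) := Quotient.finite (incSetoid n)
  haveI : Fintype (IncClasses n) := Fintype.ofFinite _
  have key : ∑ k ∈ d.divisors, k * numCycles n k = (Eset n d).ncard := by
    set O : Finset (Set (IncClasses n)) := Finset.image (oneCycle n) Finset.univ with hO
    have hnum : ∀ k, numCycles n k = (O.filter (fun S => S.ncard = k)).card := by
      intro k
      rw [numCycles]
      have hset : {S : Set (IncClasses n) | (∃ q, S = oneCycle n q) ∧ S.ncard = k}
          = ↑(O.filter (fun S => S.ncard = k)) := by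
        ext S
        simp only [Set.mem_setOf_eq, Finset.coe_filter, hO, Finset.mem_image,
          Finset.mem_univ, true_and]
        constructor
        · rintro ⟨⟨q, rfl⟩, h2⟩; exact ⟨⟨q, rfl⟩, h2⟩
        · rintro ⟨⟨q, rfl⟩, h2⟩; exact ⟨⟨q, rfl⟩, h2⟩
      rw [hset, Set.ncard_coe_finset]
    have hEfin : (Eset n d).Finite := Set.toFinite _
    set EF := hEfin.toFinset with hEF
    have hEcard : (Eset n d).ncard = EF.card := by
      rw [hEF, Set.ncard_eq_toFinset_card]
    set Ofd := O.filter (fun S => S.ncard ∣ d) with hOfd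
    have hmaps : ∀ q ∈ EF, oneCycle n q ∈ Ofd := by
      intro q hq
      rw [hEF, Set.Finite.mem_toFinset] at hq
      rw [hOfd, Finset.mem_filter]
      refine ⟨Finset.mem_image_of_mem _ (Finset.mem_univ q), ?_⟩
      rw [ncard_oneCycle hn]
      rw [mem_Eset_iff] at hq
      exact Function.IsPeriodicPt.minimalPeriod_dvd hq
    have h2 : EF.card = ∑ S ∈ Ofd, (EF.filter (fun q => oneCycle n q = S)).card :=
      Finset.card_eq_sum_card_fiberwise hmaps
    have h3 : ∀ S ∈ Ofd, (EF.filter (fun q => oneCycle n q = S)).card = S.ncard := by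
      intro S hS
      rw [hOfd, Finset.mem_filter, hO, Finset.mem_image] at hS
      obtain ⟨⟨q₀, -, rfl⟩, hdvd'⟩ := hS
      have hset : EF.filter (fun q => oneCycle n q = oneCycle n q₀)
          = (oneCycle n q₀).toFinset := by
        ext q
        simp only [Finset.mem_filter, Set.mem_toFinset, hEF, Set.Finite.mem_toFinset]
        constructor
        · rintro ⟨-, h⟩
          rw [← h]
          exact mem_oneCycle_self q
        · intro hq
          have he := oneCycle_eq_of_mem hn hq
          refine ⟨?_, he⟩
          rw [mem_Eset_iff]
          exact Function.isPeriodicPt_iff_minimalPeriod_dvd.mpr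
            (by rw [← ncard_oneCycle hn, he]; exact hdvd')
      rw [hset, ← Set.ncard_eq_toFinset_card']
    have h4 : ∑ k ∈ d.divisors, ∑ S ∈ Ofd.filter (fun S => S.ncard = k), S.ncard
        = ∑ S ∈ Ofd, S.ncard := by
      apply Finset.sum_fiberwise_of_maps_to
      intro S hS
      rw [hOfd, Finset.mem_filter] at hS
      rw [Nat.mem_divisors]
      exact ⟨hS.2, hd.ne'⟩
    have h5 : ∀ k ∈ d.divisors, ∑ S ∈ Ofd.filter (fun S => S.ncard = k), S.ncard
        = k * numCycles n k := by
      intro k hk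
      rw [Nat.mem_divisors] at hk
      have hff : Ofd.filter (fun S => S.ncard = k) = O.filter (fun S => S.ncard = k) := by
        rw [hOfd, Finset.filter_filter]
        apply Finset.filter_congr
        intro S _
        constructor
        · rintro ⟨-, h⟩; exact h
        · intro h; exact ⟨h ▸ hk.1, h⟩
      rw [hff, Finset.sum_congr rfl (fun S hS => (Finset.mem_filter.mp hS).2),
        Finset.sum_const, smul_eq_mul, hnum k, mul_comm]
    calc ∑ k ∈ d.divisors, k * numCycles n k
        = ∑ k ∈ d.divisors, ∑ S ∈ Ofd.filter (fun S => S.ncard = k), S.ncard :=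
          (Finset.sum_congr rfl h5).symm
      _ = ∑ S ∈ Ofd, S.ncard := h4
      _ = ∑ S ∈ Ofd, (EF.filter (fun q => oneCycle n q = S)).card :=
          (Finset.sum_congr rfl h3).symm
      _ = EF.card := h2.symm
      _ = (Eset n d).ncard := hEcard.symm
  refine ⟨key, ?_⟩
  have hsplit : ∑ k ∈ d.divisors, k * numCycles n k
      = d * numCycles n d + ∑ k ∈ d.divisors.erase d, k * numCycles n k :=
    (Finset.add_sum_erase _ _ (Nat.mem_divisors_self d hd.ne')).symm
  omega
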